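/- arXiv:1405.0235 — 3 statements merged into one kernel-verified Lean document; each statement's English description precedes it below -/
import Mathlib

section
/- Let α > 0 and let f, g ∈ L²([0,1];ℝ). Then the function (x,t) ↦ f(x) g(t) (x−t)_+^{α−1} is integrable on [0,1]², and the fractional integration-by-parts formula holds: ∫_0^1 f(x)·(I^α_{0+} g)(x) dx = ∫_0^1 (I^α_{1−} f)(t)·g(t) dt, i.e. (1/Γ(α)) ∫_0^1 f(x) (∫_0^x g(t)(x−t)^{α−1} dt) dx = (1/Γ(α)) ∫_0^1 g(t) (∫_t^1 f(x)(x−t)^{α−1} dx) dt. -/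
/-!
With `k u = max u 0 ^ (α - 1)`, locally integrable since `α - 1 > -1`, both partial integrals
`∫ k (x - t) dt` and `∫ k (x - t) dx` over `[0,1]` are bounded by `∫_{-1}^{1} k`. Together with
`|f x * g t| ≤ f x ^ 2 + g t ^ 2`, Tonelli then bounds the `L¹([0,1]²)` norm of
`f x * g t * k (x - t)` by `(‖f‖₂² + ‖g‖₂²) ∫_{-1}^{1} k` (Schur's test). On the triangle `t ≤ x`
the kernel is `(x - t) ^ (α - 1)`, so the two sides are the two iterated integrals of this
integrand over the triangle, and Fubini identifies them.
-/

open MeasureTheory Real Set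
open scoped ENNReal

section SchurTest

variable {X Y : Type*} [MeasurableSpace X] [MeasurableSpace Y] {μ : Measure X} {ν : Measure Y}
  [SFinite ν]

lemma lintegral_fst_mul_le {φ : X → ℝ≥0∞} (hφ : AEMeasurable φ μ) {k : X × Y → ℝ≥0∞}
    (hk : Measurable k) {C : ℝ≥0∞} (hC : ∀ᵐ x ∂μ, ∫⁻ y, k (x, y) ∂ν ≤ C) :
    ∫⁻ p, φ p.1 * k p ∂μ.prod ν ≤ (∫⁻ x, φ x ∂μ) * C := by
  rw [lintegral_prod (fun p => φ p.1 * k p) (hφ.comp_fst.mul hk.aemeasurable),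
    ← lintegral_mul_const'' C hφ]
  refine lintegral_mono_ae ?_
  filter_upwards [hC] with x hx
  rw [lintegral_const_mul _ (by fun_prop : Measurable fun y => k (x, y))]
  gcongr

lemma ENNReal.mul_le_sq_add_sq (a b : ℝ≥0∞) : a * b ≤ a ^ 2 + b ^ 2 := by
  rcases le_total a b with h | h
  · calc a * b ≤ b * b := by gcongr
      _ ≤ a ^ 2 + b ^ 2 := by rw [sq b]; exact le_add_self
  · calc a * b ≤ a * a := by gcongr
      _ ≤ a ^ 2 + b ^ 2 := by rw [sq a]; exact le_self_add

variable [SFinite μ]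

theorem integrable_mul_mul_of_lintegral_kernel_le {K : X × Y → ℝ} (hK : Measurable K)
    {C : ℝ≥0∞} (hC : C ≠ ∞) (hKx : ∀ᵐ x ∂μ, ∫⁻ y, ‖K (x, y)‖ₑ ∂ν ≤ C)
    (hKy : ∀ᵐ y ∂ν, ∫⁻ x, ‖K (x, y)‖ₑ ∂μ ≤ C) {f : X → ℝ} {g : Y → ℝ}
    (hf : MemLp f 2 μ) (hg : MemLp g 2 ν) :
    Integrable (fun p => f p.1 * g p.2 * K p) (μ.prod ν) := by
  have hf₂ : AEMeasurable (fun x => ‖f x‖ₑ ^ 2) μ := hf.1.enorm.pow_const 2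
  have hg₂ : AEMeasurable (fun y => ‖g y‖ₑ ^ 2) ν := hg.1.enorm.pow_const 2
  refine ⟨((hf.1.aemeasurable.comp_fst.mul hg.1.aemeasurable.comp_snd).mul
    hK.aemeasurable).aestronglyMeasurable, ?_⟩
  have hf_sym : ∫⁻ p, ‖g p.2‖ₑ ^ 2 * ‖K p‖ₑ ∂μ.prod ν
      = ∫⁻ p, ‖g p.1‖ₑ ^ 2 * ‖K p.swap‖ₑ ∂ν.prod μ :=
    (lintegral_prod_swap (fun p => ‖g p.2‖ₑ ^ 2 * ‖K p‖ₑ)).symm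
  calc ∫⁻ p, ‖f p.1 * g p.2 * K p‖ₑ ∂μ.prod ν
      ≤ ∫⁻ p, ‖f p.1‖ₑ ^ 2 * ‖K p‖ₑ + ‖g p.2‖ₑ ^ 2 * ‖K p‖ₑ ∂μ.prod ν := by
        refine lintegral_mono fun p => ?_
        rw [enorm_mul, enorm_mul, ← add_mul]
        gcongr
        exact ENNReal.mul_le_sq_add_sq _ _
    _ = ∫⁻ p, ‖f p.1‖ₑ ^ 2 * ‖K p‖ₑ ∂μ.prod ν + ∫⁻ p, ‖g p.2‖ₑ ^ 2 * ‖K p‖ₑ ∂μ.prod ν :=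
        lintegral_add_left' (hf₂.comp_fst.mul hK.enorm.aemeasurable) _
    _ ≤ (∫⁻ x, ‖f x‖ₑ ^ 2 ∂μ) * C + (∫⁻ y, ‖g y‖ₑ ^ 2 ∂ν) * C := by
        rw [hf_sym]
        exact add_le_add (lintegral_fst_mul_le hf₂ hK.enorm hKx)
          (lintegral_fst_mul_le hg₂ (hK.comp measurable_swap).enorm hKy)
    _ < ∞ := by
        have hf_fin := hf.integrable_sq.2
        have hg_fin := hg.integrable_sq.2
        simp only [HasFiniteIntegral, enorm_pow] at hf_fin hg_fin
        exact ENNReal.add_lt_top.2 ⟨ENNReal.mul_lt_top hf_fin hC.lt_top,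
          ENNReal.mul_lt_top hg_fin hC.lt_top⟩

end SchurTest

lemma setLIntegral_comp_sub_left_le (k : ℝ → ℝ≥0∞) {s T : Set ℝ} (hs : MeasurableSet s)
    (hT : MeasurableSet T) {x : ℝ} (hsT : ∀ t ∈ s, x - t ∈ T) :
    ∫⁻ t in s, k (x - t) ≤ ∫⁻ u in T, k u :=
  calc ∫⁻ t in s, k (x - t) = ∫⁻ t in s, T.indicator k (x - t) :=
        setLIntegral_congr_fun hs fun t ht => (indicator_of_mem (hsT t ht) k).symm
    _ ≤ ∫⁻ t, T.indicator k (x - t) := setLIntegral_le_lintegral _ _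
    _ = ∫⁻ u in T, k u := by rw [lintegral_sub_left_eq_self, lintegral_indicator hT]

lemma setLIntegral_comp_sub_right_le (k : ℝ → ℝ≥0∞) {s T : Set ℝ} (hs : MeasurableSet s)
    (hT : MeasurableSet T) {y : ℝ} (hsT : ∀ x ∈ s, x - y ∈ T) :
    ∫⁻ x in s, k (x - y) ≤ ∫⁻ u in T, k u :=
  calc ∫⁻ x in s, k (x - y) = ∫⁻ x in s, T.indicator k (x - y) :=
        setLIntegral_congr_fun hs fun x hx => (indicator_of_mem (hsT x hx) k).symm
    _ ≤ ∫⁻ x, T.indicator k (x - y) := setLIntegral_le_lintegral _ _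
    _ = ∫⁻ u in T, k u := by rw [lintegral_sub_right_eq_self, lintegral_indicator hT]

theorem integrableOn_mul_mul_comp_sub {k : ℝ → ℝ} (hk : Measurable k) {a b : ℝ}
    (hk_int : IntegrableOn k (Icc (a - b) (b - a))) {f g : ℝ → ℝ}
    (hf : MemLp f 2 (volume.restrict (Icc a b))) (hg : MemLp g 2 (volume.restrict (Icc a b))) :
    IntegrableOn (fun p : ℝ × ℝ => f p.1 * g p.2 * k (p.1 - p.2)) (Icc a b ×ˢ Icc a b) := by
  rw [IntegrableOn, Measure.volume_eq_prod, ← Measure.prod_restrict]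
  refine integrable_mul_mul_of_lintegral_kernel_le (by fun_prop) hk_int.2.ne ?_ ?_ hf hg
  · filter_upwards [ae_restrict_mem measurableSet_Icc] with x hx
    exact setLIntegral_comp_sub_left_le (‖k ·‖ₑ) measurableSet_Icc measurableSet_Icc
      fun t ht => ⟨by linarith [hx.1, ht.2], by linarith [hx.2, ht.1]⟩
  · filter_upwards [ae_restrict_mem measurableSet_Icc] with t ht
    exact setLIntegral_comp_sub_right_le (‖k ·‖ₑ) measurableSet_Icc measurableSet_Icc
      fun x hx => ⟨by linarith [hx.1, ht.2], by linarith [hx.2, ht.1]⟩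

theorem locallyIntegrable_max_rpow {r : ℝ} (hr : -1 < r) :
    LocallyIntegrable (fun u : ℝ => max u 0 ^ r) := by
  refine locallyIntegrable_of_norm_le_rpow (C := 1) (α := -r) (by simp) (by simp; linarith)
    (Filter.Eventually.of_forall fun u => ?_)
    (by fun_prop : Measurable fun u : ℝ => max u 0 ^ r).aestronglyMeasurable
  rw [one_mul, neg_neg, Real.norm_eq_abs, abs_of_nonneg (by positivity)]
  rcases le_total u 0 with hu | hu
  · rw [max_eq_right hu]
    rcases eq_or_ne r 0 with rfl | hr0
    · simp
    · rw [zero_rpow hr0]; positivity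
  · rw [max_eq_left hu, Real.norm_of_nonneg hu]

section Triangle

variable {E : Type*} [NormedAddCommGroup E] [NormedSpace ℝ E] {a b : ℝ}

lemma intervalIntegral_eq_setIntegral_indicator_Iic (h : ℝ → E) {x : ℝ} (hax : a ≤ x)
    (hxb : x ≤ b) : ∫ t in a..x, h t = ∫ t in Icc a b, (Iic x).indicator h t := by
  have : Icc a b ∩ Iic x = Icc a x :=
    Set.ext fun t => ⟨fun ht => ⟨ht.1.1, ht.2⟩, fun ht => ⟨⟨ht.1, ht.2.trans hxb⟩, ht.2⟩⟩
  rw [setIntegral_indicator measurableSet_Iic, this, integral_Icc_eq_integral_Ioc,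
    intervalIntegral.integral_of_le hax]

lemma intervalIntegral_eq_setIntegral_indicator_Ici (h : ℝ → E) {t : ℝ} (hat : a ≤ t)
    (htb : t ≤ b) : ∫ x in t..b, h x = ∫ x in Icc a b, (Ici t).indicator h x := by
  have : Icc a b ∩ Ici t = Icc t b :=
    Set.ext fun x => ⟨fun hx => ⟨hx.2, hx.1.2⟩, fun hx => ⟨⟨hat.trans hx.1, hx.2⟩, hx.1⟩⟩
  rw [setIntegral_indicator measurableSet_Ici, this, integral_Icc_eq_integral_Ioc,
    intervalIntegral.integral_of_le htb]

theorem intervalIntegral_intervalIntegral_swap_triangle [CompleteSpace E] (hab : a ≤ b)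
    {F : ℝ × ℝ → E} (hF : IntegrableOn F (Icc a b ×ˢ Icc a b)) :
    ∫ x in a..b, ∫ t in a..x, F (x, t) = ∫ t in a..b, ∫ x in t..b, F (x, t) := by
  set μ := volume.restrict (Icc a b)
  set G := {p : ℝ × ℝ | p.2 ≤ p.1}.indicator F
  have hG : Integrable G (μ.prod μ) := by
    rw [Measure.prod_restrict, ← Measure.volume_eq_prod]
    exact hF.indicator (measurableSet_le measurable_snd measurable_fst)
  calc ∫ x in a..b, ∫ t in a..x, F (x, t)
      = ∫ x, ∫ t, G (x, t) ∂μ ∂μ := by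
        rw [intervalIntegral.integral_of_le hab, ← integral_Icc_eq_integral_Ioc]
        exact setIntegral_congr_fun measurableSet_Icc fun x hx =>
          intervalIntegral_eq_setIntegral_indicator_Iic _ hx.1 hx.2
    _ = ∫ t, ∫ x, G (x, t) ∂μ ∂μ := integral_integral_swap hG
    _ = ∫ t in a..b, ∫ x in t..b, F (x, t) := by
        rw [intervalIntegral.integral_of_le hab, ← integral_Icc_eq_integral_Ioc]
        exact setIntegral_congr_fun measurableSet_Icc fun t ht =>
          (intervalIntegral_eq_setIntegral_indicator_Ici _ ht.1 ht.2).symm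

end Triangle

/-- Fractional integration by parts: for `α > 0` and `f, g ∈ L²([0,1])`, the kernel
`(x,t) ↦ f x * g t * (x−t)₊^(α−1)` is integrable on `[0,1]²` and
`∫₀¹ f (I^α_{0+} g) = ∫₀¹ (I^α_{1−} f) g`. -/
theorem fractional_integration_by_parts
    (α : ℝ) (hα : 0 < α) (f g : ℝ → ℝ)
    (hf : MemLp f 2 (volume.restrict (Icc (0:ℝ) 1)))
    (hg : MemLp g 2 (volume.restrict (Icc (0:ℝ) 1))) :
    IntegrableOn
      (fun p : ℝ × ℝ => f p.1 * g p.2 * (max (p.1 - p.2) 0) ^ (α - 1))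
      (Icc (0:ℝ) 1 ×ˢ Icc (0:ℝ) 1) ∧
    (1 / Real.Gamma α) * ∫ x in (0:ℝ)..1, f x * ∫ t in (0:ℝ)..x, g t * (x - t) ^ (α - 1)
      = (1 / Real.Gamma α) * ∫ t in (0:ℝ)..1, g t * ∫ x in t..(1:ℝ), f x * (x - t) ^ (α - 1) := by
  have hF := integrableOn_mul_mul_comp_sub (by fun_prop)
    ((locallyIntegrable_max_rpow (r := α - 1) (by linarith)).integrableOn_isCompact
      isCompact_Icc) hf hg
  refine ⟨hF, congrArg _ ?_⟩
  have h_left : ∀ x ∈ uIcc (0:ℝ) 1, f x * ∫ t in (0:ℝ)..x, g t * (x - t) ^ (α - 1)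
      = ∫ t in (0:ℝ)..x, f x * g t * max (x - t) 0 ^ (α - 1) := by
    intro x hx
    rw [uIcc_of_le zero_le_one] at hx
    rw [← intervalIntegral.integral_const_mul]
    refine intervalIntegral.integral_congr fun t ht => ?_
    rw [uIcc_of_le hx.1] at ht
    rw [max_eq_left (sub_nonneg.2 ht.2), mul_assoc]
  have h_right : ∀ t ∈ uIcc (0:ℝ) 1, g t * ∫ x in t..(1:ℝ), f x * (x - t) ^ (α - 1)
      = ∫ x in t..(1:ℝ), f x * g t * max (x - t) 0 ^ (α - 1) := by
    intro t ht
    rw [uIcc_of_le zero_le_one] at ht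
    rw [← intervalIntegral.integral_const_mul]
    refine intervalIntegral.integral_congr fun x hx => ?_
    rw [uIcc_of_le ht.2] at hx
    rw [max_eq_left (sub_nonneg.2 hx.1)]
    ring
  rw [intervalIntegral.integral_congr h_left, intervalIntegral.integral_congr h_right]
  exact intervalIntegral_intervalIntegral_swap_triangle zero_le_one hF
end

section
/- Let μ be a probability measure on a separable real Hilbert space H, let k ≥ 1, and let F : H → ℝ be k times continuously Fréchet differentiable with F and all its derivatives up to order k bounded. Then for every t ≥ 0 the function P_t F is k times Fréchet differentiable and its k-th derivative satisfies the commutation relation ∇^{(k)}(P_t F)(u) = e^{−kt} ∫_H ∇^{(k)}F(e^{−t} u + √(1−e^{−2t}) v) dμ(v) = e^{−kt} P_t(∇^{(k)}F)(u) for all u ∈ H (an equality of continuous k-multilinear forms on H). -/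
open MeasureTheory Real

/-!
`P_t F = mehlerTransform μ (e^{-t}) (√(1 - e^{-2t})) F` averages `F` over the affine maps
`u ↦ a • u + b • v`, all of which have linear part `a • id`. Since the derivatives of `F` up to
order `k` are bounded, dominated convergence lets us differentiate under the integral `k` times,
and by the chain rule each differentiation contributes one factor `a = e^{-t}`.
-/

section

variable {H E : Type*} [NormedAddCommGroup H] [NormedSpace ℝ H] [MeasurableSpace H]
  [NormedAddCommGroup E] [NormedSpace ℝ E]

noncomputable def mehlerTransform (μ : Measure H) (a b : ℝ) (Φ : H → E) (u : H) : E :=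
  ∫ v, Φ (a • u + b • v) ∂μ

namespace mehlerTransform

theorem comp_linearIsometryEquiv {F : Type*} [NormedAddCommGroup F] [NormedSpace ℝ F]
    (μ : Measure H) (a b : ℝ) (L : E ≃ₗᵢ[ℝ] F) (Φ : H → E) :
    mehlerTransform μ a b (L ∘ Φ) = L ∘ mehlerTransform μ a b Φ :=
  funext fun _ => L.toContinuousLinearEquiv.integral_comp_comm _

variable [TopologicalSpace.SeparableSpace H] [BorelSpace H] (μ : Measure H) [IsFiniteMeasure μ]
  (a b : ℝ)

omit [NormedSpace ℝ E] in
theorem integrable_comp_affine {Φ : H → E} (hΦ : Continuous Φ) {C : ℝ} (hC : ∀ x, ‖Φ x‖ ≤ C)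
    (u : H) : Integrable (fun v => Φ (a • u + b • v)) μ := by
  have : SecondCountableTopology H := UniformSpace.secondCountable_of_separable H
  exact ⟨(hΦ.comp (by fun_prop)).aestronglyMeasurable,
    .of_bounded (C := C) (ae_of_all _ fun v => hC _)⟩

theorem continuous {Φ : H → E} (hΦ : Continuous Φ) {C : ℝ} (hC : ∀ x, ‖Φ x‖ ≤ C) :
    Continuous (mehlerTransform μ a b Φ) :=
  continuous_of_dominated (fun u => (integrable_comp_affine μ a b hΦ hC u).1)
    (fun _ => ae_of_all _ fun _ => hC _) (integrable_const C)
    (ae_of_all _ fun _ => hΦ.comp (by fun_prop))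

theorem hasFDerivAt {Φ : H → E} (hΦ : ContDiff ℝ 1 Φ) {C₀ C₁ : ℝ}
    (hC₀ : ∀ x, ‖Φ x‖ ≤ C₀) (hC₁ : ∀ x, ‖fderiv ℝ Φ x‖ ≤ C₁) (u : H) :
    HasFDerivAt (mehlerTransform μ a b Φ) (a • mehlerTransform μ a b (fderiv ℝ Φ) u) u := by
  have hΦ' : Continuous (fderiv ℝ Φ) := hΦ.continuous_fderiv one_ne_zero
  have hchain (v x : H) : HasFDerivAt (fun x => Φ (a • x + b • v))
      (a • fderiv ℝ Φ (a • x + b • v)) x := by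
    have hΦx := (hΦ.differentiable one_ne_zero (a • x + b • v)).hasFDerivAt
    refine (hΦx.comp x (((hasFDerivAt_id x).const_smul a).add_const (b • v))).congr_fderiv ?_
    rw [ContinuousLinearMap.comp_smul, ContinuousLinearMap.comp_id]
  have key := hasFDerivAt_integral_of_dominated_of_fderiv_le (μ := μ) (x₀ := u)
    (F' := fun x v => a • fderiv ℝ Φ (a • x + b • v)) (bound := fun _ => |a| * C₁)
    Filter.univ_mem (.of_forall fun x => (integrable_comp_affine μ a b hΦ.continuous hC₀ x).1)
    (integrable_comp_affine μ a b hΦ.continuous hC₀ u)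
    ((integrable_comp_affine μ a b hΦ' hC₁ u).1.const_smul a)
    (ae_of_all _ fun v x _ => (norm_smul_le _ _).trans
      (mul_le_mul_of_nonneg_left (hC₁ _) (abs_nonneg a)))
    (integrable_const _) (ae_of_all _ fun v x _ => hchain v x)
  rwa [integral_smul] at key

theorem hasFDerivAt_iteratedFDeriv {n : ℕ} {Φ : H → E}
    (hΦ : ContDiff ℝ n Φ) (hb : ∀ i ≤ n, ∃ C, ∀ x, ‖iteratedFDeriv ℝ i Φ x‖ ≤ C) {m : ℕ}
    (hm : m < n) (u : H) :
    HasFDerivAt (mehlerTransform μ a b (iteratedFDeriv ℝ m Φ))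
      (a • mehlerTransform μ a b (fderiv ℝ (iteratedFDeriv ℝ m Φ)) u) u := by
  obtain ⟨C₀, hC₀⟩ := hb m hm.le
  obtain ⟨C₁, hC₁⟩ := hb (m + 1) hm
  exact hasFDerivAt μ a b (hΦ.iteratedFDeriv_right (m := 1) (by norm_cast; omega)) hC₀
    (fun x => norm_fderiv_iteratedFDeriv.trans_le (hC₁ x)) u

theorem iteratedFDeriv_eq {n : ℕ} {Φ : H → E} (hΦ : ContDiff ℝ n Φ)
    (hb : ∀ i ≤ n, ∃ C, ∀ x, ‖iteratedFDeriv ℝ i Φ x‖ ≤ C) {m : ℕ} (hm : m ≤ n) :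
    iteratedFDeriv ℝ m (mehlerTransform μ a b Φ) =
      a ^ m • mehlerTransform μ a b (iteratedFDeriv ℝ m Φ) := by
  induction m with
  | zero =>
    rw [iteratedFDeriv_zero_eq_comp, iteratedFDeriv_zero_eq_comp, pow_zero, one_smul]
    exact (comp_linearIsometryEquiv μ a b _ Φ).symm
  | succ m ih =>
    have hfderiv : fderiv ℝ (iteratedFDeriv ℝ m (mehlerTransform μ a b Φ)) =
        a ^ (m + 1) • mehlerTransform μ a b (fderiv ℝ (iteratedFDeriv ℝ m Φ)) := by
      rw [ih (by omega)]
      funext u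
      rw [((hasFDerivAt_iteratedFDeriv μ a b hΦ hb hm u).const_smul (a ^ m)).fderiv, pow_succ,
        mul_smul]
      rfl
    rw [iteratedFDeriv_succ_eq_comp_left, hfderiv, iteratedFDeriv_succ_eq_comp_left,
      comp_linearIsometryEquiv (E := H →L[ℝ] ContinuousMultilinearMap ℝ (fun _ : Fin m => H) E)
        (F := ContinuousMultilinearMap ℝ (fun _ : Fin (m + 1) => H) E) μ a b
        (continuousMultilinearCurryLeftEquiv ℝ (fun _ : Fin (m + 1) => H) E).symm]
    funext u
    exact LinearIsometryEquiv.map_smul _ _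

theorem contDiff {n : ℕ} {Φ : H → E} (hΦ : ContDiff ℝ n Φ)
    (hb : ∀ i ≤ n, ∃ C, ∀ x, ‖iteratedFDeriv ℝ i Φ x‖ ≤ C) :
    ContDiff ℝ n (mehlerTransform μ a b Φ) := by
  refine contDiff_nat_iff_continuous_differentiable.mpr ⟨fun m hm => ?_, fun m hm => ?_⟩ <;>
    rw [iteratedFDeriv_eq μ a b hΦ hb (by omega)]
  · obtain ⟨C, hC⟩ := hb m hm
    exact (continuous μ a b (hΦ.continuous_iteratedFDeriv (by norm_cast)) hC).const_smul _
  · exact fun u => (hasFDerivAt_iteratedFDeriv μ a b hΦ hb hm u).differentiableAt.const_smul _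

end mehlerTransform

end

theorem mehler_semigroup_iteratedFDeriv_comm_general
    {H : Type*} [NormedAddCommGroup H] [InnerProductSpace ℝ H]
    [TopologicalSpace.SeparableSpace H] [MeasurableSpace H] [BorelSpace H]
    (μ : Measure H) [IsProbabilityMeasure μ]
    (k : ℕ) (F : H → ℝ)
    (hF : ContDiff ℝ k F)
    (hFb : ∀ i ≤ k, ∃ C, ∀ u, ‖iteratedFDeriv ℝ i F u‖ ≤ C)
    (t : ℝ) :
    ContDiff ℝ k
      (fun u => ∫ v, F (Real.exp (-t) • u + Real.sqrt (1 - Real.exp (-2 * t)) • v) ∂μ) ∧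
    ∀ u : H,
      iteratedFDeriv ℝ k
          (fun u => ∫ v, F (Real.exp (-t) • u + Real.sqrt (1 - Real.exp (-2 * t)) • v) ∂μ) u
        = Real.exp (-(k : ℝ) * t) •
            ∫ v, iteratedFDeriv ℝ k F
              (Real.exp (-t) • u + Real.sqrt (1 - Real.exp (-2 * t)) • v) ∂μ := by
  refine ⟨mehlerTransform.contDiff μ _ _ hF hFb, fun u => ?_⟩
  have hexp : Real.exp (-(k : ℝ) * t) = Real.exp (-t) ^ k := by
    rw [← Real.exp_nat_mul, mul_neg, neg_mul]
  rw [hexp]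
  exact congrFun (mehlerTransform.iteratedFDeriv_eq μ _ _ hF hFb le_rfl) u

/-- Commutation of the Mehler (Ornstein–Uhlenbeck) semigroup with iterated derivatives:
if `F : H → ℝ` is `C^k` with `F` and all derivatives up to order `k` bounded, then for
`t ≥ 0` the function `P_t F` is `C^k` and
`∇^{(k)}(P_t F)(u) = e^{−kt} ∫ ∇^{(k)}F(e^{−t}u + √(1−e^{−2t})v) dμ(v) = e^{−kt} P_t(∇^{(k)}F)(u)`. -/
theorem mehler_semigroup_iteratedFDeriv_comm
    {H : Type*} [NormedAddCommGroup H] [InnerProductSpace ℝ H] [CompleteSpace H]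
    [TopologicalSpace.SeparableSpace H] [MeasurableSpace H] [BorelSpace H]
    (μ : Measure H) [IsProbabilityMeasure μ]
    (k : ℕ) (hk : 1 ≤ k) (F : H → ℝ)
    (hF : ContDiff ℝ k F)
    (hFb : ∀ i ≤ k, ∃ C, ∀ u, ‖iteratedFDeriv ℝ i F u‖ ≤ C)
    (t : ℝ) (ht : 0 ≤ t) :
    ContDiff ℝ k
      (fun u => ∫ v, F (Real.exp (-t) • u + Real.sqrt (1 - Real.exp (-2 * t)) • v) ∂μ) ∧
    ∀ u : H,
      iteratedFDeriv ℝ k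
          (fun u => ∫ v, F (Real.exp (-t) • u + Real.sqrt (1 - Real.exp (-2 * t)) • v) ∂μ) u
        = Real.exp (-(k : ℝ) * t) •
            ∫ v, iteratedFDeriv ℝ k F
              (Real.exp (-t) • u + Real.sqrt (1 - Real.exp (-2 * t)) • v) ∂μ :=
  mehler_semigroup_iteratedFDeriv_comm_general μ k F hF hFb t
end

section
/- Let μ be a probability measure on a separable real Hilbert space H, let k ≥ 1, and let F : H → ℝ be k times continuously Fréchet differentiable with F and all its derivatives up to order k bounded. Then ∫_0^∞ sup_{u∈H} ‖∇^{(k)}(P_t F)(u)‖ dt ≤ (1/k) · sup_{u∈H} ‖∇^{(k)}F(u)‖, where ‖·‖ denotes the norm of a continuous k-multilinear form on H. -/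
open MeasureTheory Real

/-!
Writing `a = e^{-t}` and `c = √(1 - e^{-2t})`, the Mehler semigroup is `P_t F(w) = Φ(a w)` with
`Φ(x) = ∫ F(x + c v) dμ(v)`. Bounded derivatives may be differentiated under the integral, so
`∇^{(k)}Φ(x) = ∫ ∇^{(k)}F(x + c v) dμ(v)` has norm at most `sup ‖∇^{(k)}F‖`, and the scaling
contributes the factor `a^k = e^{-kt}`. Integrating `e^{-kt}` over `(0, ∞)` gives `1/k`.
-/

theorem iteratedFDeriv_comp_smul {𝕜 E F : Type*} [NontriviallyNormedField 𝕜]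
    [NormedAddCommGroup E] [NormedSpace 𝕜 E] [NormedAddCommGroup F] [NormedSpace 𝕜 F]
    (f : E → F) (a : 𝕜) (x : E) (i : ℕ) :
    iteratedFDeriv 𝕜 i (fun y => f (a • y)) x = a ^ i • iteratedFDeriv 𝕜 i f (a • x) := by
  rcases eq_or_ne a 0 with rfl | ha
  · rcases i.eq_zero_or_pos with rfl | hi
    · ext; simp
    · simp [iteratedFDeriv_const_of_ne hi.ne', zero_pow hi.ne']
  · let e : E ≃L[𝕜] E := ContinuousLinearEquiv.smulLeft (Units.mk0 a ha)
    have h := e.iteratedFDerivWithin_comp_right f uniqueDiffOn_univ (Set.mem_univ (e x)) i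
    simp only [Set.preimage_univ, iteratedFDerivWithin_univ] at h
    change iteratedFDeriv 𝕜 i (f ∘ e) x = _
    ext m
    simp [h, e, ContinuousMultilinearMap.map_smul_univ, Units.smul_def]

section TranslationAverage

variable {Ω E G : Type*} [MeasurableSpace Ω] {ν : Measure Ω} [IsFiniteMeasure ν]
  [NormedAddCommGroup E] [NormedAddCommGroup G] {Y : Ω → E}

theorem integrable_comp_add_of_bounded (hY : AEStronglyMeasurable Y ν) {g : E → G}
    (hg : Continuous g) {C : ℝ} (hC : ∀ x, ‖g x‖ ≤ C) (x : E) :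
    Integrable (fun ω => g (x + Y ω)) ν :=
  .of_bound (hg.comp_aestronglyMeasurable (hY.const_add x)) C (ae_of_all _ fun _ => hC _)

variable [NormedSpace ℝ E] [NormedSpace ℝ G]

theorem hasFDerivAt_integral_comp_add (hY : AEStronglyMeasurable Y ν) {g : E → G}
    (hg : ContDiff ℝ 1 g) {C C' : ℝ} (hC : ∀ x, ‖g x‖ ≤ C) (hC' : ∀ x, ‖fderiv ℝ g x‖ ≤ C')
    (x : E) :
    HasFDerivAt (fun y => ∫ ω, g (y + Y ω) ∂ν) (∫ ω, fderiv ℝ g (x + Y ω) ∂ν) x := by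
  have hg' : Continuous (fderiv ℝ g) := hg.continuous_fderiv one_ne_zero
  refine hasFDerivAt_integral_of_dominated_of_fderiv_le
    (F' := fun y ω => fderiv ℝ g (y + Y ω)) (bound := fun _ => C') Filter.univ_mem
    (.of_forall fun y => (integrable_comp_add_of_bounded hY hg.continuous hC y).1)
    (integrable_comp_add_of_bounded hY hg.continuous hC x)
    (integrable_comp_add_of_bounded hY hg' hC' x).1
    (ae_of_all _ fun _ _ _ => hC' _) (integrable_const C') (ae_of_all _ fun ω y _ => ?_)
  exact ((hg.differentiable one_ne_zero _).hasFDerivAt.comp y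
    ((hasFDerivAt_id y).add_const (Y ω)))

theorem iteratedFDeriv_integral_comp_add (hY : AEStronglyMeasurable Y ν) {f : E → G} {k : ℕ}
    (hf : ContDiff ℝ k f) (hfb : ∀ i ≤ k, ∃ C, ∀ x, ‖iteratedFDeriv ℝ i f x‖ ≤ C)
    {i : ℕ} (hi : i ≤ k) (x : E) :
    iteratedFDeriv ℝ i (fun y => ∫ ω, f (y + Y ω) ∂ν) x
      = ∫ ω, iteratedFDeriv ℝ i f (x + Y ω) ∂ν := by
  induction i generalizing x with
  | zero =>
    simp only [iteratedFDeriv_zero_eq_comp, Function.comp_apply]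
    exact ((continuousMultilinearCurryFin0 ℝ E G).symm.toContinuousLinearEquiv.integral_comp_comm
      _).symm
  | succ i ih =>
    obtain ⟨C, hC⟩ := hfb i (by omega)
    obtain ⟨C', hC'⟩ := hfb (i + 1) hi
    have hderiv := hasFDerivAt_integral_comp_add hY (hf.iteratedFDeriv_right (by norm_cast; omega))
      hC (fun y => norm_fderiv_iteratedFDeriv.trans_le (hC' y)) x
    simp only [iteratedFDeriv_succ_eq_comp_left, Function.comp_apply]
    rw [funext (ih (by omega)), hderiv.fderiv]
    exact ((continuousMultilinearCurryLeftEquiv ℝ (fun _ : Fin (i + 1) => E) G).symm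
      |>.toContinuousLinearEquiv.integral_comp_comm (𝕜 := ℝ)
        (fun ω => fderiv ℝ (iteratedFDeriv ℝ i f) (x + Y ω))).symm

theorem norm_iteratedFDeriv_integral_comp_add_le [IsProbabilityMeasure ν]
    (hY : AEStronglyMeasurable Y ν) {f : E → G} {k : ℕ} (hf : ContDiff ℝ k f)
    (hfb : ∀ i ≤ k, ∃ C, ∀ x, ‖iteratedFDeriv ℝ i f x‖ ≤ C) (x : E) :
    ‖iteratedFDeriv ℝ k (fun y => ∫ ω, f (y + Y ω) ∂ν) x‖
      ≤ ⨆ z, ‖iteratedFDeriv ℝ k f z‖ := by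
  obtain ⟨C, hC⟩ := hfb k le_rfl
  have hbdd : BddAbove (Set.range fun z => ‖iteratedFDeriv ℝ k f z‖) :=
    ⟨C, Set.forall_mem_range.2 hC⟩
  rw [iteratedFDeriv_integral_comp_add hY hf hfb le_rfl]
  simpa using norm_integral_le_of_norm_le_const (μ := ν)
    (ae_of_all _ fun ω => le_ciSup hbdd (x + Y ω))

end TranslationAverage

theorem setIntegral_Ioi_zero_le_of_le_mul_exp {f : ℝ → ℝ} {M b : ℝ} (hb : 0 < b)
    (hf₀ : ∀ t, 0 ≤ f t) (hf : ∀ t > 0, f t ≤ M * exp (-b * t)) :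
    ∫ t in Set.Ioi 0, f t ≤ M / b := by
  calc ∫ t in Set.Ioi 0, f t ≤ ∫ t in Set.Ioi 0, M * exp (-b * t) :=
        integral_mono_of_nonneg (ae_of_all _ hf₀)
          ((exp_neg_integrableOn_Ioi 0 hb).const_mul M)
          (ae_restrict_of_forall_mem measurableSet_Ioi hf)
    _ = M / b := by
        rw [integral_const_mul, integral_exp_mul_Ioi (by linarith) 0]
        field_simp
        simp

theorem mehler_semigroup_iteratedFDeriv_integral_bound_general
    {H : Type*} [NormedAddCommGroup H] [InnerProductSpace ℝ H]
    [TopologicalSpace.SeparableSpace H] [MeasurableSpace H] [BorelSpace H]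
    (μ : Measure H) [IsProbabilityMeasure μ]
    (k : ℕ) (hk : 1 ≤ k) (F : H → ℝ)
    (hF : ContDiff ℝ k F)
    (hFb : ∀ i ≤ k, ∃ C, ∀ u, ‖iteratedFDeriv ℝ i F u‖ ≤ C) :
    (∫ t in Set.Ioi (0:ℝ),
        ⨆ u : H, ‖iteratedFDeriv ℝ k
          (fun w => ∫ v, F (Real.exp (-t) • w + Real.sqrt (1 - Real.exp (-2 * t)) • v) ∂μ) u‖)
      ≤ (1 / (k : ℝ)) * ⨆ u : H, ‖iteratedFDeriv ℝ k F u‖ := by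
  rw [one_div_mul_eq_div]
  refine setIntegral_Ioi_zero_le_of_le_mul_exp (by exact_mod_cast hk)
    (fun t => Real.iSup_nonneg fun _ => norm_nonneg _) fun t _ => ?_
  refine Real.iSup_le (fun u => ?_) (mul_nonneg (Real.iSup_nonneg fun _ => norm_nonneg _)
    (exp_pos _).le)
  have hY : AEStronglyMeasurable (fun v : H => √(1 - exp (-2 * t)) • v) μ :=
    aestronglyMeasurable_id.const_smul _
  have hscale := iteratedFDeriv_comp_smul
    (fun x => ∫ v, F (x + √(1 - exp (-2 * t)) • v) ∂μ) (exp (-t)) u k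
  rw [hscale, norm_smul, norm_pow, norm_of_nonneg (exp_pos _).le, ← exp_nat_mul, mul_neg,
    ← neg_mul, mul_comm]
  gcongr
  exact norm_iteratedFDeriv_integral_comp_add_le hY hF hFb _

/-- Integrated gradient bound for the Mehler (Ornstein–Uhlenbeck) semigroup: if
`F : H → ℝ` is `C^k` with `F` and all derivatives up to order `k` bounded, then
`∫₀^∞ sup_u ‖∇^{(k)}(P_t F)(u)‖ dt ≤ (1/k) sup_u ‖∇^{(k)}F(u)‖`. -/
theorem mehler_semigroup_iteratedFDeriv_integral_bound
    {H : Type*} [NormedAddCommGroup H] [InnerProductSpace ℝ H] [CompleteSpace H]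
    [TopologicalSpace.SeparableSpace H] [MeasurableSpace H] [BorelSpace H]
    (μ : Measure H) [IsProbabilityMeasure μ]
    (k : ℕ) (hk : 1 ≤ k) (F : H → ℝ)
    (hF : ContDiff ℝ k F)
    (hFb : ∀ i ≤ k, ∃ C, ∀ u, ‖iteratedFDeriv ℝ i F u‖ ≤ C) :
    (∫ t in Set.Ioi (0:ℝ),
        ⨆ u : H, ‖iteratedFDeriv ℝ k
          (fun w => ∫ v, F (Real.exp (-t) • w + Real.sqrt (1 - Real.exp (-2 * t)) • v) ∂μ) u‖)
      ≤ (1 / (k : ℝ)) * ⨆ u : H, ‖iteratedFDeriv ℝ k F u‖ :=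
  mehler_semigroup_iteratedFDeriv_integral_bound_general μ k hk F hF hFb
end
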